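/- arXiv:2108.11551 — 4 statements merged into one kernel-verified Lean document; each statement's English description precedes it below -/
import Mathlib

section
/- Fix γ ∈ (0, 1], integers p ≥ 1 and m ≥ 2, vectors x_1, …, x_m ∈ ℝ^p, positive reals D_1, …, D_m, fixed reals y_2, …, y_m, and a compact set Ψ_∞ ⊂ ℝ^p × (0, ∞). Suppose ψ† = (β†, A†) ∈ Ψ_∞ is the unique maximizer over Ψ_∞ of ψ = (β, A) ↦ m^{−1} ∑_{i=2}^m 𝒟_γ(y_i; x_iᵀβ, A + D_i), and that for every y_1 ∈ ℝ there is ψ̂(y_1) = (β̂(y_1), Â(y_1)) ∈ Ψ_∞ maximizing ψ ↦ m^{−1} ∑_{i=1}^m 𝒟_γ(y_i; x_iᵀβ, A + D_i) over Ψ_∞. For a parameter ψ = (β, A) define θ_i^{(γ)}(ψ) = y_i − w_γ(y_i; x_iᵀβ, A + D_i) (D_i/(A + D_i)) (y_i − x_iᵀβ) and s_i^{2(γ)}(ψ) = D_i + w_γ(y_i; x_iᵀβ, A + D_i) (D_i²/(A + D_i)²) {γ(y_i − x_iᵀβ)² − (A + D_i)}. Then as |y_1| → ∞: (i) ψ̂(y_1)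 → ψ†; (ii) θ_1^{(γ)}(ψ̂(y_1)) − y_1 → 0 and s_1^{2(γ)}(ψ̂(y_1)) → D_1; (iii) for every i ≠ 1, θ_i^{(γ)}(ψ̂(y_1)) → θ_i^{(γ)}(ψ†) and s_i^{2(γ)}(ψ̂(y_1)) → s_i^{2(γ)}(ψ†). -/
open Filter Finset Real

/-- Density of `N(μ, σ²)`. -/
noncomputable def gaussPdf (y μ s2 : ℝ) : ℝ :=
  (Real.sqrt (2 * Real.pi * s2))⁻¹ * Real.exp (-(y - μ) ^ 2 / (2 * s2))

/-- γ-divergence weight `w_γ(y; μ, σ²) = φ(y;μ,σ²)^γ (2πσ²)^{γ²/(2(1+γ))}`. -/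
noncomputable def gammaWeight (γ y μ s2 : ℝ) : ℝ :=
  gaussPdf y μ s2 ^ γ * (2 * Real.pi * s2) ^ (γ ^ 2 / (2 * (1 + γ)))

/-- γ-divergence objective `𝒟_γ(y; μ, σ²) = γ⁻¹ w_γ(y; μ, σ²)`. -/
noncomputable def gammaObj (γ y μ s2 : ℝ) : ℝ := γ⁻¹ * gammaWeight γ y μ s2

/-- Robust posterior mean
`θ^{(γ)} = y − w_γ(y; x'β, A+D)·(D/(A+D))·(y − x'β)` for `ψ = (β, A)`. -/
noncomputable def robMean (γ y μ A Di : ℝ) : ℝ :=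
  y - gammaWeight γ y μ (A + Di) * (Di / (A + Di)) * (y - μ)

/-- Robust posterior variance
`s^{2(γ)} = D + w_γ(y; x'β, A+D)·(D²/(A+D)²)·{γ(y−x'β)² − (A+D)}`. -/
noncomputable def robVar (γ y μ A Di : ℝ) : ℝ :=
  Di + gammaWeight γ y μ (A + Di) * (Di ^ 2 / (A + Di) ^ 2)
    * (γ * (y - μ) ^ 2 - (A + Di))

/-!
Splitting off the outlying area, the objective is `G ψ + m⁻¹ 𝒟_γ(y₁; x₁ᵀβ, A + D₁)`, where `G` is
the objective of the other areas. On the compact set `Ψ∞` the mean `x₁ᵀβ` is bounded and the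
variance `A + D₁` ranges over a compact subinterval `[a, b]` of `(0, ∞)`, so
`w_γ(y₁; x₁ᵀβ, A + D₁) ≤ K exp (-γ (y₁ - x₁ᵀβ)² / (2b))`: the outlier's weight, even multiplied
by a power of its residual, tends to `0` uniformly on `Ψ∞` as `|y₁| → ∞`. The objectives thus
converge uniformly to `G`, whose maximiser `ψ†` on the compact `Ψ∞` is unique, which forces
`ψ̂(y₁) → ψ†`. Then `θ₁ - y₁` and `s₁² - D₁` are that decaying weight times a polynomial in the
residual and factors converging along `ψ̂`, and for `i ≠ 1` the data `yᵢ` is fixed, so (iii) is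
continuity of `θᵢ` and `sᵢ²` in `ψ` at `ψ†`.
-/

open scoped Topology

theorem gammaWeight_eq_rpow_mul_exp {γ s2 : ℝ} (hγ : 0 < γ) (y μ : ℝ) (hs2 : 0 < s2) :
    gammaWeight γ y μ s2 =
      (2 * π * s2) ^ (-(γ / (2 * (1 + γ)))) * exp (-(γ * (y - μ) ^ 2 / (2 * s2))) := by
  have h2pi : 0 < 2 * π * s2 := by positivity
  unfold gammaWeight gaussPdf
  rw [sqrt_eq_rpow, ← rpow_neg h2pi.le, mul_rpow (rpow_nonneg h2pi.le _) (exp_nonneg _),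
    ← rpow_mul h2pi.le, ← exp_mul, mul_right_comm, ← rpow_add h2pi]
  congr 2
  · field_simp
    ring
  · ring

theorem gammaWeight_nonneg (γ y μ : ℝ) {s2 : ℝ} (hs2 : 0 ≤ s2) : 0 ≤ gammaWeight γ y μ s2 := by
  unfold gammaWeight gaussPdf
  positivity

theorem gammaWeight_le {γ a b s2 : ℝ} (hγ : 0 < γ) (y μ : ℝ) (ha : 0 < a) (has : a ≤ s2)
    (hsb : s2 ≤ b) :
    gammaWeight γ y μ s2 ≤
      (2 * π * a) ^ (-(γ / (2 * (1 + γ)))) * exp (-(γ / (2 * b)) * (y - μ) ^ 2) := by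
  have hs2 : 0 < s2 := ha.trans_le has
  rw [gammaWeight_eq_rpow_mul_exp hγ y μ hs2, neg_mul, div_mul_eq_mul_div]
  gcongr ?_ * exp (-?_)
  · exact rpow_le_rpow_of_nonpos (by positivity) (by gcongr) (neg_nonpos.2 (by positivity))
  · gcongr

theorem continuousAt_gammaWeight {X : Type*} [TopologicalSpace X] (γ y : ℝ) {μ s : X → ℝ}
    {z : X} (hμ : ContinuousAt μ z) (hs : ContinuousAt s z) (hsz : 0 < s z) :
    ContinuousAt (fun z => gammaWeight γ y (μ z) (s z)) z := by
  have hvar : 0 < 2 * π * s z := by positivity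
  unfold gammaWeight gaussPdf
  refine ContinuousAt.mul (ContinuousAt.rpow_const ?_ (Or.inl ?_))
    (ContinuousAt.rpow_const (by fun_prop) (Or.inl hvar.ne'))
  · refine ContinuousAt.mul ?_ (by fun_prop (disch := positivity))
    exact (continuous_sqrt.continuousAt.comp (by fun_prop)).inv₀ (sqrt_pos.2 hvar).ne'
  · have := sqrt_pos.2 hvar
    positivity

theorem continuousAt_robMean {X : Type*} [TopologicalSpace X] (γ y D : ℝ) {μ A : X → ℝ}
    {z : X} (hμ : ContinuousAt μ z) (hA : ContinuousAt A z) (hAz : 0 < A z + D) :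
    ContinuousAt (fun z => robMean γ y (μ z) (A z) D) z := by
  have hw := continuousAt_gammaWeight γ y hμ (hA.add continuousAt_const) hAz
  unfold robMean
  fun_prop (disch := exact hAz.ne')

theorem continuousAt_robVar {X : Type*} [TopologicalSpace X] (γ y D : ℝ) {μ A : X → ℝ}
    {z : X} (hμ : ContinuousAt μ z) (hA : ContinuousAt A z) (hAz : 0 < A z + D) :
    ContinuousAt (fun z => robVar γ y (μ z) (A z) D) z := by
  have hw := continuousAt_gammaWeight γ y hμ (hA.add continuousAt_const) hAz
  unfold robVar
  fun_prop (disch := positivity)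

theorem tendsto_gammaWeight_mul_pow {ι : Type*} {l : Filter ι} {γ a b : ℝ} {y μ s : ι → ℝ}
    (hγ : 0 < γ) (ha : 0 < a) (hs : ∀ᶠ j in l, s j ∈ Set.Icc a b)
    (hres : Tendsto (fun j => y j - μ j) l (cocompact ℝ)) (n : ℕ) :
    Tendsto (fun j => gammaWeight γ (y j) (μ j) (s j) * (y j - μ j) ^ n) l (𝓝 0) := by
  -- `max a b` rather than `b`: `hs` alone does not give `0 < b` (e.g. when `l = ⊥`)
  have hc : 0 < γ / (2 * max a b) := by positivity
  have hK := ((tendsto_rpow_abs_mul_exp_neg_mul_sq_cocompact hc n).comp hres).const_mul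
    ((2 * π * a) ^ (-(γ / (2 * (1 + γ)))))
  rw [mul_zero] at hK
  refine squeeze_zero_norm' ?_ hK
  filter_upwards [hs] with j ⟨has, hsb⟩
  rw [norm_mul, norm_pow, Real.norm_eq_abs, Real.norm_eq_abs,
    abs_of_nonneg (gammaWeight_nonneg _ _ _ (ha.le.trans has)), Function.comp_apply,
    rpow_natCast]
  calc gammaWeight γ (y j) (μ j) (s j) * |y j - μ j| ^ n
      ≤ (2 * π * a) ^ (-(γ / (2 * (1 + γ)))) *
          exp (-(γ / (2 * max a b)) * (y j - μ j) ^ 2) * |y j - μ j| ^ n := by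
        gcongr
        exact gammaWeight_le hγ _ _ ha has (hsb.trans (le_max_right a b))
    _ = _ := by ring

theorem tendsto_gammaWeight_mul_pow_of_isCompact {X ι : Type*} [TopologicalSpace X] {γ : ℝ}
    (hγ : 0 < γ) {Ψ : Set X} (hΨ : IsCompact Ψ) {μ s : X → ℝ} (hμ : ContinuousOn μ Ψ)
    (hs : ContinuousOn s Ψ) (hs_pos : ∀ ψ ∈ Ψ, 0 < s ψ) {l : Filter ι} {y : ι → ℝ}
    {ψ : ι → X} (hy : Tendsto y l (cocompact ℝ)) (hψ : ∀ᶠ j in l, ψ j ∈ Ψ) (n : ℕ) :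
    Tendsto (fun j => gammaWeight γ (y j) (μ (ψ j)) (s (ψ j)) * (y j - μ (ψ j)) ^ n) l
      (𝓝 0) := by
  obtain ⟨a, ha, hsa⟩ := hΨ.exists_forall_le' hs hs_pos
  obtain ⟨b, hsb⟩ := hΨ.bddAbove_image hs
  obtain ⟨B, hμB⟩ := hΨ.exists_bound_of_continuousOn hμ
  refine tendsto_gammaWeight_mul_pow (b := b) hγ ha ?_ ?_ n
  · filter_upwards [hψ] with j hj using ⟨hsa _ hj, hsb (Set.mem_image_of_mem s hj)⟩
  · refine tendsto_cocompact_of_tendsto_dist_comp_atTop 0 <| tendsto_atTop_mono' l ?_ <|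
      tendsto_atTop_add_const_right l (-B) (tendsto_norm_cocompact_atTop.comp hy)
    filter_upwards [hψ] with j hj
    have hμj : |μ (ψ j)| ≤ B := hμB _ hj
    simp only [Function.comp_apply, Real.norm_eq_abs, Real.dist_0_eq_abs]
    linarith [abs_sub_abs_le_abs_sub (y j) (μ (ψ j))]

theorem tendsto_robMean_sub_self {ι : Type*} {l : Filter ι} {γ D A₀ : ℝ} {y μ A : ι → ℝ}
    (hA : Tendsto A l (𝓝 A₀)) (hA₀ : A₀ + D ≠ 0)
    (hw : Tendsto (fun j => gammaWeight γ (y j) (μ j) (A j + D) * (y j - μ j)) l (𝓝 0)) :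
    Tendsto (fun j => robMean γ (y j) (μ j) (A j) D - y j) l (𝓝 0) := by
  have h := (((tendsto_const_nhds (x := D)).div (hA.add_const D) hA₀).mul hw).neg
  rw [mul_zero, neg_zero] at h
  refine h.congr fun j => ?_
  dsimp only [Pi.div_apply]
  unfold robMean
  ring

theorem tendsto_robVar {ι : Type*} {l : Filter ι} {γ D A₀ : ℝ} {y μ A : ι → ℝ}
    (hA : Tendsto A l (𝓝 A₀)) (hA₀ : A₀ + D ≠ 0)
    (hw₀ : Tendsto (fun j => gammaWeight γ (y j) (μ j) (A j + D)) l (𝓝 0))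
    (hw₂ : Tendsto (fun j => gammaWeight γ (y j) (μ j) (A j + D) * (y j - μ j) ^ 2) l (𝓝 0)) :
    Tendsto (fun j => robVar γ (y j) (μ j) (A j) D) l (𝓝 D) := by
  have hA' := hA.add_const D
  have h := (tendsto_const_nhds (x := D)).add
    (((tendsto_const_nhds (x := D ^ 2)).div (hA'.pow 2) (pow_ne_zero 2 hA₀)).mul
      ((hw₂.const_mul γ).sub (hA'.mul hw₀)))
  rw [mul_zero, mul_zero, sub_zero, mul_zero, add_zero] at h
  refine h.congr fun j => ?_
  dsimp only [Pi.div_apply]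
  unfold robVar
  ring

theorem tendstoUniformlyOn_of_tendsto_sub {X ι : Type*} {l : Filter ι} {Ψ : Set X}
    {F : ι → X → ℝ} {G : X → ℝ}
    (h : Tendsto (fun q : ι × X => F q.1 q.2 - G q.2) (l ×ˢ 𝓟 Ψ) (𝓝 0)) :
    TendstoUniformlyOn F G l Ψ := by
  rw [tendstoUniformlyOn_iff_tendsto, tendsto_uniformity_iff_dist_tendsto_zero]
  simpa only [dist_comm, Real.dist_eq, abs_zero] using h.abs

theorem IsCompact.tendsto_of_isMaxOn_of_tendstoUniformlyOn {X ι : Type*} [TopologicalSpace X]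
    {Ψ : Set X} (hΨ : IsCompact Ψ) {G : X → ℝ} (hG : ContinuousOn G Ψ) {x₀ : X}
    (hG_lt : ∀ x ∈ Ψ, x ≠ x₀ → G x < G x₀) (hx₀ : x₀ ∈ Ψ) {l : Filter ι} {F : ι → X → ℝ}
    (hF : TendstoUniformlyOn F G l Ψ) {x : ι → X} (hxΨ : ∀ i, x i ∈ Ψ)
    (hx : ∀ i, IsMaxOn (F i) Ψ (x i)) :
    Tendsto x l (𝓝 x₀) := by
  refine (nhds_basis_opens x₀).tendsto_right_iff.2 fun U ⟨hx₀U, hU⟩ => ?_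
  -- `sup_{Ψ \ U} G ≤ -M < G x₀` by compactness of `Ψ \ U`
  obtain ⟨M, hMlt, hGM⟩ : ∃ M, -G x₀ < M ∧ ∀ z ∈ Ψ \ U, M ≤ -G z :=
    (hΨ.diff hU).exists_forall_le' (hG.neg.mono Set.sdiff_subset)
      fun z hz => neg_lt_neg (hG_lt z hz.1 fun h => hz.2 (h ▸ hx₀U))
  filter_upwards [Metric.tendstoUniformlyOn_iff.1 hF ((G x₀ + M) / 2) (by linarith)] with i hi
  by_contra hxU
  have h₀ := abs_lt.1 (hi x₀ hx₀)
  have h₁ := abs_lt.1 (hi (x i) (hxΨ i))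
  linarith [hGM (x i) ⟨hxΨ i, hxU⟩, isMaxOn_iff.1 (hx i) x₀ hx₀]

theorem IsCompact.tendsto_of_isMaxOn_add_gammaWeight {X : Type*} [TopologicalSpace X] {γ c : ℝ}
    (hγ : 0 < γ) {Ψ : Set X} (hΨ : IsCompact Ψ) {G : X → ℝ} (hG : ContinuousOn G Ψ) {x₀ : X}
    (hG_lt : ∀ x ∈ Ψ, x ≠ x₀ → G x < G x₀) (hx₀ : x₀ ∈ Ψ) {μ s : X → ℝ}
    (hμ : ContinuousOn μ Ψ) (hs : ContinuousOn s Ψ) (hs_pos : ∀ ψ ∈ Ψ, 0 < s ψ) {x : ℝ → X}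
    (hxΨ : ∀ t, x t ∈ Ψ)
    (hx : ∀ t, IsMaxOn (fun ψ => G ψ + c * gammaWeight γ t (μ ψ) (s ψ)) Ψ (x t)) :
    Tendsto x (cocompact ℝ) (𝓝 x₀) := by
  refine hΨ.tendsto_of_isMaxOn_of_tendstoUniformlyOn hG hG_lt hx₀
    (tendstoUniformlyOn_of_tendsto_sub ?_) hxΨ hx
  have h := (tendsto_gammaWeight_mul_pow_of_isCompact hγ hΨ hμ hs hs_pos tendsto_fst
    ((eventually_principal.2 fun _ => id).prod_inr _) 0).const_mul c
  simp only [pow_zero, mul_one, mul_zero] at h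
  simpa only [add_sub_cancel_left] using h

theorem tendsto_atTop_and_atBot_of_cocompact {α : Type*} {f : ℝ → α} {l : Filter α}
    (h : Tendsto f (cocompact ℝ) l) : Tendsto f atTop l ∧ Tendsto f atBot l :=
  ⟨h.mono_left atTop_le_cocompact, h.mono_left atBot_le_cocompact⟩

/-- Proposition 2: tail robustness of the γ-divergence empirical Bayes quantities.
As `y₁ → ±∞`, the robust estimator `ψ̂(y₁)` converges to the maximizer `ψ†` of the
objective based on the non-outlying observations; the outlying area's robust
posterior mean/variance reduce to the direct estimator `y₁` and sampling variance
`D₁`; and the non-outlying areas' quantities converge to those evaluated at `ψ†`. -/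
theorem robust_eb_tail_robustness
    (γ : ℝ) (hγ0 : 0 < γ)
    (p m : ℕ) (hm : 2 ≤ m)
    (x : Fin m → Fin p → ℝ) (D : Fin m → ℝ) (hD : ∀ i, 0 < D i)
    (y0 : Fin m → ℝ)
    (Y : ℝ → Fin m → ℝ)
    (hY1 : ∀ t : ℝ, Y t ⟨0, by omega⟩ = t)
    (hYi : ∀ t : ℝ, ∀ i : Fin m, i ≠ ⟨0, by omega⟩ → Y t i = y0 i)
    (Ψ : Set ((Fin p → ℝ) × ℝ)) (hΨc : IsCompact Ψ)
    (hΨpos : ∀ ψ ∈ Ψ, 0 < ψ.2)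
    (ψdag : (Fin p → ℝ) × ℝ) (hψdagΨ : ψdag ∈ Ψ)
    (hdagmax : ∀ ψ ∈ Ψ, ψ ≠ ψdag →
      (m : ℝ)⁻¹ * ∑ i ∈ univ.erase (⟨0, by omega⟩ : Fin m),
          gammaObj γ (y0 i) (∑ k, x i k * ψ.1 k) (ψ.2 + D i)
        < (m : ℝ)⁻¹ * ∑ i ∈ univ.erase (⟨0, by omega⟩ : Fin m),
          gammaObj γ (y0 i) (∑ k, x i k * ψdag.1 k) (ψdag.2 + D i))
    (ψhat : ℝ → (Fin p → ℝ) × ℝ) (hψhatΨ : ∀ t, ψhat t ∈ Ψ)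
    (hhatmax : ∀ t : ℝ, ∀ ψ ∈ Ψ,
      (m : ℝ)⁻¹ * ∑ i, gammaObj γ (Y t i) (∑ k, x i k * ψ.1 k) (ψ.2 + D i)
        ≤ (m : ℝ)⁻¹ * ∑ i, gammaObj γ (Y t i)
            (∑ k, x i k * (ψhat t).1 k) ((ψhat t).2 + D i)) :
    -- (i) convergence of the estimator
    (Tendsto ψhat atTop (nhds ψdag) ∧ Tendsto ψhat atBot (nhds ψdag)) ∧
    -- (ii) the outlying area: robust mean tracks y₁, robust variance tends to D₁
    ((Tendsto (fun t => robMean γ (Y t ⟨0, by omega⟩)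
          (∑ k, x ⟨0, by omega⟩ k * (ψhat t).1 k) (ψhat t).2 (D ⟨0, by omega⟩) - t)
        atTop (nhds 0) ∧
      Tendsto (fun t => robMean γ (Y t ⟨0, by omega⟩)
          (∑ k, x ⟨0, by omega⟩ k * (ψhat t).1 k) (ψhat t).2 (D ⟨0, by omega⟩) - t)
        atBot (nhds 0)) ∧
     (Tendsto (fun t => robVar γ (Y t ⟨0, by omega⟩)
          (∑ k, x ⟨0, by omega⟩ k * (ψhat t).1 k) (ψhat t).2 (D ⟨0, by omega⟩))
        atTop (nhds (D ⟨0, by omega⟩)) ∧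
      Tendsto (fun t => robVar γ (Y t ⟨0, by omega⟩)
          (∑ k, x ⟨0, by omega⟩ k * (ψhat t).1 k) (ψhat t).2 (D ⟨0, by omega⟩))
        atBot (nhds (D ⟨0, by omega⟩)))) ∧
    -- (iii) non-outlying areas converge to the quantities evaluated at ψ†
    ∀ i : Fin m, i ≠ ⟨0, by omega⟩ →
      ((Tendsto (fun t => robMean γ (Y t i) (∑ k, x i k * (ψhat t).1 k)
            (ψhat t).2 (D i))
          atTop (nhds (robMean γ (y0 i) (∑ k, x i k * ψdag.1 k) ψdag.2 (D i))) ∧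
        Tendsto (fun t => robMean γ (Y t i) (∑ k, x i k * (ψhat t).1 k)
            (ψhat t).2 (D i))
          atBot (nhds (robMean γ (y0 i) (∑ k, x i k * ψdag.1 k) ψdag.2 (D i)))) ∧
       (Tendsto (fun t => robVar γ (Y t i) (∑ k, x i k * (ψhat t).1 k)
            (ψhat t).2 (D i))
          atTop (nhds (robVar γ (y0 i) (∑ k, x i k * ψdag.1 k) ψdag.2 (D i))) ∧
        Tendsto (fun t => robVar γ (Y t i) (∑ k, x i k * (ψhat t).1 k)
            (ψhat t).2 (D i))
          atBot (nhds (robVar γ (y0 i) (∑ k, x i k * ψdag.1 k) ψdag.2 (D i))))) := by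
  set i0 : Fin m := ⟨0, by omega⟩
  have hμ : ∀ i, Continuous fun ψ : (Fin p → ℝ) × ℝ => ∑ k, x i k * ψ.1 k := fun i => by
    fun_prop
  have hvar : ∀ i, ∀ ψ ∈ Ψ, 0 < ψ.2 + D i := fun i ψ hψ => add_pos (hΨpos ψ hψ) (hD i)
  have hsplit : ∀ t (ψ : (Fin p → ℝ) × ℝ),
      (m : ℝ)⁻¹ * ∑ i, gammaObj γ (Y t i) (∑ k, x i k * ψ.1 k) (ψ.2 + D i) =
        (m : ℝ)⁻¹ * ∑ i ∈ univ.erase i0, gammaObj γ (y0 i) (∑ k, x i k * ψ.1 k) (ψ.2 + D i) +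
          (m : ℝ)⁻¹ * γ⁻¹ * gammaWeight γ t (∑ k, x i0 k * ψ.1 k) (ψ.2 + D i0) := fun t ψ => by
    rw [← add_sum_erase _ _ (mem_univ i0), hY1, gammaObj, sum_congr rfl fun i hi =>
      congrArg (gammaObj γ · _ _) (hYi t i (ne_of_mem_erase hi))]
    ring
  have hG : ContinuousOn (fun ψ : (Fin p → ℝ) × ℝ => (m : ℝ)⁻¹ *
      ∑ i ∈ univ.erase i0, gammaObj γ (y0 i) (∑ k, x i k * ψ.1 k) (ψ.2 + D i)) Ψ :=
    continuousOn_const.mul <| continuousOn_finsetSum _ fun i _ => continuousOn_const.mul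
      fun ψ hψ => (continuousAt_gammaWeight γ (y0 i) (hμ i).continuousAt (by fun_prop)
        (hvar i ψ hψ)).continuousWithinAt
  have hψhat : Tendsto ψhat (cocompact ℝ) (𝓝 ψdag) :=
    hΨc.tendsto_of_isMaxOn_add_gammaWeight hγ0 hG hdagmax hψdagΨ (hμ i0).continuousOn
      (by fun_prop) (hvar i0) hψhatΨ fun t => isMaxOn_iff.2 fun ψ hψ => by
        simpa only [hsplit] using hhatmax t ψ hψ
  have hA : Tendsto (fun t => (ψhat t).2) (cocompact ℝ) (𝓝 ψdag.2) :=
    (continuous_snd.tendsto _).comp hψhat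
  have hw := tendsto_gammaWeight_mul_pow_of_isCompact hγ0 hΨc (hμ i0).continuousOn
    (by fun_prop) (hvar i0) tendsto_id (Eventually.of_forall hψhatΨ)
  have hmean := tendsto_robMean_sub_self hA (hvar i0 ψdag hψdagΨ).ne' (by simpa using hw 1)
  have hvar₀ := tendsto_robVar hA (hvar i0 ψdag hψdagΨ).ne' (by simpa using hw 0) (hw 2)
  simp only [hY1]
  refine ⟨tendsto_atTop_and_atBot_of_cocompact hψhat, ⟨tendsto_atTop_and_atBot_of_cocompact hmean,
    tendsto_atTop_and_atBot_of_cocompact hvar₀⟩, fun i hi => ?_⟩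
  simp only [hYi _ i hi]
  exact ⟨tendsto_atTop_and_atBot_of_cocompact ((continuousAt_robMean γ (y0 i) (D i)
      (hμ i).continuousAt continuous_snd.continuousAt (hvar i ψdag hψdagΨ)).tendsto.comp hψhat),
    tendsto_atTop_and_atBot_of_cocompact ((continuousAt_robVar γ (y0 i) (D i)
      (hμ i).continuousAt continuous_snd.continuousAt (hvar i ψdag hψdagΨ)).tendsto.comp hψhat)⟩
end

section
/- Let μ ∈ ℝ, σ² > 0, γ > 0 and D ∈ ℝ. Then the function y ↦ 𝒟_γ(y; μ, σ²) = γ^{−1} φ(y; μ, σ²)^γ (2πσ²)^{γ²/(2(1+γ))} is twice differentiable in y and for every y ∈ ℝ, D + D² · (d²/dy²) 𝒟_γ(y; μ, σ²) = D + w_γ(y; μ, σ²) · (D²/σ⁴) · {γ (y − μ)² − σ²}, where w_γ(y; μ, σ²) = φ(y; μ, σ²)^γ (2πσ²)^{γ²/(2(1+γ))}. -/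
open Real

/-!
Raising the Gaussian density to the power `γ` gives again a Gaussian kernel,
`w_γ(y) = w_γ(μ) · exp(c (y - μ)²)` with `c = -γ/(2σ²)`. Differentiating
`exp(c (y - μ)²)` twice multiplies it by `(2c(y - μ))² + 2c`, and for this `c`
the factor `γ⁻¹((2c(y - μ))² + 2c)` equals `(γ(y - μ)² - σ²)/σ⁴`.
-/

noncomputable def gaussKernel (c μ z : ℝ) : ℝ := exp (c * (z - μ) ^ 2)

section GaussKernel

variable (c μ : ℝ)

theorem hasDerivAt_gaussKernel (z : ℝ) :
    HasDerivAt (gaussKernel c μ) (2 * c * (z - μ) * gaussKernel c μ z) z := by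
  have hquad : HasDerivAt (fun z : ℝ => c * (z - μ) ^ 2) (2 * c * (z - μ)) z :=
    ((((hasDerivAt_id' z).sub_const μ).pow 2).const_mul c).congr_deriv (by ring)
  exact hquad.exp.congr_deriv (mul_comm _ _)

theorem deriv_gaussKernel :
    deriv (gaussKernel c μ) = fun z => 2 * c * (z - μ) * gaussKernel c μ z :=
  funext fun z => (hasDerivAt_gaussKernel c μ z).deriv

theorem hasDerivAt_deriv_gaussKernel (z : ℝ) :
    HasDerivAt (deriv (gaussKernel c μ))
      (((2 * c * (z - μ)) ^ 2 + 2 * c) * gaussKernel c μ z) z := by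
  have hlin : HasDerivAt (fun z : ℝ => 2 * c * (z - μ)) (2 * c) z :=
    (((hasDerivAt_id' z).sub_const μ).const_mul (2 * c)).congr_deriv (mul_one _)
  rw [deriv_gaussKernel]
  exact (hlin.mul (hasDerivAt_gaussKernel c μ z)).congr_deriv (by ring)

end GaussKernel

theorem gammaWeight_eq_mul_gaussKernel (γ y μ s2 : ℝ) :
    gammaWeight γ y μ s2 = gammaWeight γ μ μ s2 * gaussKernel (-γ / (2 * s2)) μ y := by
  have hexp (x : ℝ) : exp x ^ γ = exp (γ * x) := by rw [← exp_mul, mul_comm]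
  have hsplit : γ * (-(y - μ) ^ 2 / (2 * s2)) =
      γ * (-(μ - μ) ^ 2 / (2 * s2)) + -γ / (2 * s2) * (y - μ) ^ 2 := by ring
  simp only [gammaWeight, gaussPdf, gaussKernel,
    mul_rpow (inv_nonneg.mpr (sqrt_nonneg _)) (exp_nonneg _), hexp]
  rw [hsplit, exp_add]
  ring

theorem gammaObj_eq_mul_gaussKernel (γ μ s2 : ℝ) :
    (fun y => gammaObj γ y μ s2) =
      fun y => γ⁻¹ * gammaWeight γ μ μ s2 * gaussKernel (-γ / (2 * s2)) μ y := by
  funext y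
  rw [gammaObj, gammaWeight_eq_mul_gaussKernel, mul_assoc]

theorem inv_mul_second_deriv_factor {γ : ℝ} (hγ : γ ≠ 0) (s2 a : ℝ) :
    γ⁻¹ * ((2 * (-γ / (2 * s2)) * a) ^ 2 + 2 * (-γ / (2 * s2))) = (γ * a ^ 2 - s2) / s2 ^ 2 := by
  rcases eq_or_ne s2 0 with rfl | hs2
  · simp
  · field_simp
    ring

theorem tweedie_second_general (μ s2 γ D : ℝ) (hγ : 0 < γ) :
    (∀ y, DifferentiableAt ℝ (fun z => gammaObj γ z μ s2) y) ∧
    (∀ y, DifferentiableAt ℝ (deriv (fun z => gammaObj γ z μ s2)) y) ∧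
    ∀ y, D + D ^ 2 * deriv (deriv (fun z => gammaObj γ z μ s2)) y
        = D + gammaWeight γ y μ s2 * (D ^ 2 / s2 ^ 2) * (γ * (y - μ) ^ 2 - s2) := by
  set c := -γ / (2 * s2)
  set A := γ⁻¹ * gammaWeight γ μ μ s2
  have hderiv : deriv (fun z => gammaObj γ z μ s2) = fun z => A * deriv (gaussKernel c μ) z := by
    rw [gammaObj_eq_mul_gaussKernel, deriv_const_mul_field']
  refine ⟨fun y => ?_, fun y => ?_, fun y => ?_⟩
  · rw [gammaObj_eq_mul_gaussKernel]
    exact ((hasDerivAt_gaussKernel c μ y).const_mul A).differentiableAt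
  · rw [hderiv]
    exact ((hasDerivAt_deriv_gaussKernel c μ y).const_mul A).differentiableAt
  · rw [hderiv, ((hasDerivAt_deriv_gaussKernel c μ y).const_mul A).deriv,
      gammaWeight_eq_mul_gaussKernel γ y]
    linear_combination (D ^ 2 * gammaWeight γ μ μ s2 * gaussKernel c μ y) *
      inv_mul_second_deriv_factor hγ.ne' s2 (y - μ)

/-- Second Tweedie-type identity:
`D + D²·(d²/dy²)𝒟_γ(y;μ,σ²) = D + w_γ(y;μ,σ²)(D²/σ⁴){γ(y−μ)² − σ²}`. -/
theorem tweedie_second (μ s2 γ D : ℝ) (hs2 : 0 < s2) (hγ : 0 < γ) :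
    (∀ y, DifferentiableAt ℝ (fun z => gammaObj γ z μ s2) y) ∧
    (∀ y, DifferentiableAt ℝ (deriv (fun z => gammaObj γ z μ s2)) y) ∧
    ∀ y, D + D ^ 2 * deriv (deriv (fun z => gammaObj γ z μ s2)) y
        = D + gammaWeight γ y μ s2 * (D ^ 2 / s2 ^ 2) * (γ * (y - μ) ^ 2 - s2) :=
  tweedie_second_general μ s2 γ D hγ
end

section
/- Let μ ∈ ℝ, σ² > 0, D ∈ ℝ and γ ≥ 0. Then ∫_ℝ φ(t; μ, σ²) · w_γ(t; μ, σ²) · (D²/σ⁴) · {γ (t − μ)² − σ²} dt = − (D²/σ²) · (2πσ²)^{−γ/(2(1+γ))} · (1+γ)^{−3/2}, where w_γ(t; μ, σ²) = φ(t; μ, σ²)^γ (2πσ²)^{γ²/(2(1+γ))}. -/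
/-! The tilted density `φ · w_γ` is `φ^(1+γ)` up to a constant, and a power of a Gaussian density
is again a Gaussian density, of variance `σ²/(1+γ)`. The criterion is therefore a constant times
`E[γ(X - μ)² - σ²]` for `X ~ N(μ, σ²/(1+γ))`, which is `-σ²/(1+γ)`. -/

open Real MeasureTheory

open ProbabilityTheory
open scoped NNReal

lemma gaussPdf_eq_rpow (y μ : ℝ) {s2 : ℝ} (hs2 : 0 ≤ s2) :
    gaussPdf y μ s2 = (2 * π * s2) ^ (-(1 / 2 : ℝ)) * exp (-(y - μ) ^ 2 / (2 * s2)) := by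
  rw [gaussPdf, sqrt_eq_rpow, rpow_neg (by positivity)]

lemma gaussPdf_rpow (y μ : ℝ) {s2 p : ℝ} (hs2 : 0 < s2) (hp : 0 < p) :
    gaussPdf y μ s2 ^ p
      = (2 * π * s2) ^ ((1 - p) / 2) * p ^ (-(1 / 2 : ℝ)) * gaussPdf y μ (s2 / p) := by
  have hP : 0 < 2 * π * s2 := by positivity
  rw [gaussPdf_eq_rpow _ _ hs2.le, gaussPdf_eq_rpow _ _ (by positivity), mul_div_assoc',
    div_rpow hP.le hp.le, mul_rpow (by positivity) (exp_pos _).le, ← rpow_mul hP.le,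
    ← exp_mul]
  have hexp : -(y - μ) ^ 2 / (2 * (s2 / p)) = -(y - μ) ^ 2 / (2 * s2) * p := by
    field_simp
  have hpow : (2 * π * s2) ^ ((1 - p) / 2) * (2 * π * s2) ^ (-(1 / 2 : ℝ))
      = (2 * π * s2) ^ (-(1 / 2 : ℝ) * p) := by
    rw [← rpow_add hP]; ring_nf
  rw [hexp, ← hpow]
  field_simp

lemma gaussPdf_mul_gammaWeight (t μ : ℝ) {s2 γ : ℝ} (hs2 : 0 < s2) (hγ : 0 < 1 + γ) :
    gaussPdf t μ s2 * gammaWeight γ t μ s2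
      = (2 * π * s2) ^ (-(γ / (2 * (1 + γ)))) * (1 + γ) ^ (-(1 / 2 : ℝ))
          * gaussPdf t μ (s2 / (1 + γ)) := by
  have hP : 0 < 2 * π * s2 := by positivity
  have hpdf : 0 < gaussPdf t μ s2 := by rw [gaussPdf]; positivity
  have hexp : (1 - (1 + γ)) / 2 + γ ^ 2 / (2 * (1 + γ)) = -(γ / (2 * (1 + γ))) := by
    field_simp; ring
  rw [gammaWeight, ← mul_assoc, ← rpow_one_add' hpdf.le (by linarith), gaussPdf_rpow _ _ hs2 hγ,
    ← hexp, rpow_add hP]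
  ring

lemma integral_gaussPdf_mul_eq_integral_gaussianReal (μ : ℝ) {v : ℝ≥0} (hv : v ≠ 0) (f : ℝ → ℝ) :
    ∫ t, gaussPdf t μ v * f t = ∫ t, f t ∂gaussianReal μ v := by
  rw [integral_gaussianReal_eq_integral_smul hv]
  rfl

lemma integral_sq_sub_mean_gaussianReal (μ : ℝ) (v : ℝ≥0) :
    ∫ x, (x - μ) ^ 2 ∂gaussianReal μ v = v := by
  rw [← variance_fun_id_gaussianReal (μ := μ), variance_eq_integral aemeasurable_id',
    integral_id_gaussianReal]

lemma integral_mul_sq_sub_mean_sub_gaussianReal (μ a b : ℝ) (v : ℝ≥0) :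
    ∫ x, (a * (x - μ) ^ 2 - b) ∂gaussianReal μ v = a * v - b := by
  have hint : Integrable (fun x => (x - μ) ^ 2) (gaussianReal μ v) :=
    ((memLp_id_gaussianReal 2).sub (memLp_const μ)).integrable_sq
  rw [integral_sub (hint.const_mul a) (integrable_const b), integral_const_mul,
    integral_sq_sub_mean_gaussianReal, integral_const]
  simp

/-- Closed form of the population selection criterion under correct specification:
`∫ φ(t;μ,σ²) w_γ(t;μ,σ²) (D²/σ⁴){γ(t−μ)² − σ²} dt
  = −(D²/σ²)(2πσ²)^{−γ/(2(1+γ))}(1+γ)^{−3/2}`. -/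
theorem population_criterion_closed_form (μ s2 D γ : ℝ) (hs2 : 0 < s2) (hγ : 0 ≤ γ) :
    ∫ t : ℝ,
        gaussPdf t μ s2 * gammaWeight γ t μ s2 * (D ^ 2 / s2 ^ 2)
          * (γ * (t - μ) ^ 2 - s2)
      = -(D ^ 2 / s2) * (2 * Real.pi * s2) ^ (-(γ / (2 * (1 + γ))))
          * (1 + γ) ^ (-(3 : ℝ) / 2) := by
  have hγ' : 0 < 1 + γ := by linarith
  have hv : 0 < s2 / (1 + γ) := by positivity
  set v := (s2 / (1 + γ)).toNNReal
  set C := (2 * π * s2) ^ (-(γ / (2 * (1 + γ)))) * (1 + γ) ^ (-(1 / 2 : ℝ)) * (D ^ 2 / s2 ^ 2)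
  have hintegrand : ∀ t, gaussPdf t μ s2 * gammaWeight γ t μ s2 * (D ^ 2 / s2 ^ 2)
      * (γ * (t - μ) ^ 2 - s2) = C * (gaussPdf t μ v * (γ * (t - μ) ^ 2 - s2)) := by
    intro t
    rw [gaussPdf_mul_gammaWeight t μ hs2 hγ', Real.coe_toNNReal _ hv.le]
    ring
  simp_rw [hintegrand]
  rw [integral_const_mul, integral_gaussPdf_mul_eq_integral_gaussianReal μ (by simpa [v] using hv),
    integral_mul_sq_sub_mean_sub_gaussianReal, Real.coe_toNNReal _ hv.le]
  have h32 : (1 + γ) ^ (-(3 : ℝ) / 2) = (1 + γ) ^ (-(1 / 2 : ℝ)) / (1 + γ) := by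
    rw [← rpow_sub_one hγ'.ne']; norm_num
  rw [h32]
  simp only [C]
  field_simp
  ring
end

section
/- Let σ² > 0 and D ∈ ℝ. There exists a constant K > 0, depending only on σ² and D, such that for all γ ∈ [0, 1] and all y, b ∈ ℝ, | [ y − w_γ(y; b, σ²) (D/σ²)(y − b) ] − [ y − (D/σ²)(y − b) ] | ≤ K (1 + (y − b)²/σ²) (1 + |y − b|) γ, where w_γ(y; b, σ²) = φ(y; b, σ²)^γ (2πσ²)^{γ²/(2(1+γ))} (and w_0 ≡ 1). -/
/-!
Writing `t = y - b` and `L = log (2πσ²)`, the weight is `exp (-γ (t²/(2σ²) + L/(2(1+γ))))`, and the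
deviation equals `(1 - w_γ) (D/σ²) t`. For `γ ∈ [0, 1]` the exponent is at least `-|L|/2`, and on
`[-c, ∞)` the map `x ↦ 1 - exp (-x)` is `e^c`-Lipschitz at `0`; so `|1 - w_γ|` is at most
`γ (t²/(2σ²) + |L|/2) e^{|L|/2}`, which is linear in `γ` and quadratic in `t`.
-/

open Real

lemma abs_one_sub_exp_neg_le {x c : ℝ} (hc : 0 ≤ c) (hx : -c ≤ x) :
    |1 - exp (-x)| ≤ |x| * exp c := by
  rcases le_or_gt 0 x with hx0 | hx0
  · have hexp : exp (-x) ≤ 1 := exp_le_one_iff.mpr (neg_nonpos.mpr hx0)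
    rw [abs_of_nonneg (sub_nonneg.mpr hexp), abs_of_nonneg hx0]
    nlinarith [add_one_le_exp (-x), one_le_exp hc]
  · -- `exp (-x) - 1 ≤ -x exp (-x)` is `1 - x ≤ exp x` multiplied by `exp (-x)`.
    have hexp : 1 ≤ exp (-x) := one_le_exp (by linarith)
    have hmul : exp x * exp (-x) = 1 := by rw [← exp_add, add_neg_cancel, exp_zero]
    have hle : exp (-x) ≤ exp c := exp_le_exp.mpr (by linarith)
    rw [abs_of_nonpos (sub_nonpos.mpr hexp), abs_of_neg hx0]
    nlinarith [add_one_le_exp x, mul_le_mul_of_nonneg_left hle (neg_nonneg.mpr hx0.le)]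

lemma log_gaussPdf {s2 : ℝ} (hs2 : 0 < s2) (y μ : ℝ) :
    log (gaussPdf y μ s2) = -log (2 * π * s2) / 2 - (y - μ) ^ 2 / (2 * s2) := by
  rw [gaussPdf, log_mul (by positivity) (exp_ne_zero _), log_inv,
    log_sqrt (by positivity), log_exp]
  ring

lemma gammaWeight_eq_exp {γ s2 : ℝ} (hs2 : 0 < s2) (hγ : 1 + γ ≠ 0) (y μ : ℝ) :
    gammaWeight γ y μ s2
      = exp (-(γ * ((y - μ) ^ 2 / (2 * s2) + log (2 * π * s2) / (2 * (1 + γ))))) := by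
  have hpdf : 0 < gaussPdf y μ s2 := by unfold gaussPdf; positivity
  rw [gammaWeight, rpow_def_of_pos hpdf, rpow_def_of_pos (by positivity), ← exp_add,
    log_gaussPdf hs2]
  congr 1
  field_simp
  ring

lemma abs_one_sub_gammaWeight_le {γ s2 : ℝ} (hs2 : 0 < s2) (hγ : γ ∈ Set.Icc (0 : ℝ) 1)
    (y μ : ℝ) :
    |1 - gammaWeight γ y μ s2|
      ≤ γ * ((y - μ) ^ 2 / (2 * s2) + |log (2 * π * s2)| / 2) * exp (|log (2 * π * s2)| / 2) := by
  obtain ⟨hγ0, hγ1⟩ := hγ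
  set v := (y - μ) ^ 2 / (2 * s2)
  set L := log (2 * π * s2)
  have hv : 0 ≤ v := by positivity
  have hd : |L / (2 * (1 + γ))| ≤ |L| / 2 := by
    rw [abs_div, abs_of_pos (show 0 < 2 * (1 + γ) by linarith)]
    exact div_le_div_of_nonneg_left (abs_nonneg L) two_pos (by linarith)
  have hdC := abs_le.mp hd
  rw [gammaWeight_eq_exp hs2 (by linarith)]
  calc |1 - exp (-(γ * (v + L / (2 * (1 + γ)))))|
      ≤ |γ * (v + L / (2 * (1 + γ)))| * exp (|L| / 2) := by
        refine abs_one_sub_exp_neg_le (by positivity) ?_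
        nlinarith [mul_le_mul_of_nonneg_left hdC.1 hγ0]
    _ ≤ γ * (v + |L| / 2) * exp (|L| / 2) := by
        gcongr
        rw [abs_mul, abs_of_nonneg hγ0]
        gcongr
        exact (abs_add_le _ _).trans (by rw [abs_of_nonneg hv]; linarith)

/-- Bound (S9): the robust posterior mean deviates from the standard posterior mean
at most linearly in `γ`. -/
theorem robust_mean_deviation_bound (s2 D : ℝ) (hs2 : 0 < s2) :
    ∃ K > 0, ∀ γ ∈ Set.Icc (0 : ℝ) 1, ∀ y b : ℝ,
      |(y - gammaWeight γ y b s2 * (D / s2) * (y - b)) - (y - D / s2 * (y - b))|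
        ≤ K * (1 + (y - b) ^ 2 / s2) * (1 + |y - b|) * γ := by
  set C := |log (2 * π * s2)| / 2
  refine ⟨(1 + |D| / s2) * (1 + C) * exp C, by positivity, fun γ hγ y b => ?_⟩
  have hweight := abs_one_sub_gammaWeight_le hs2 hγ y b
  have hγ0 : 0 ≤ γ := hγ.1
  have hv : (y - b) ^ 2 / (2 * s2) + C ≤ (1 + C) * (1 + (y - b) ^ 2 / s2) := by
    have : (y - b) ^ 2 / (2 * s2) ≤ (y - b) ^ 2 / s2 :=
      div_le_div_of_nonneg_left (sq_nonneg _) hs2 (by linarith)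
    nlinarith [show 0 ≤ C by positivity, show 0 ≤ (y - b) ^ 2 / s2 by positivity]
  calc |(y - gammaWeight γ y b s2 * (D / s2) * (y - b)) - (y - D / s2 * (y - b))|
      = |1 - gammaWeight γ y b s2| * (|D| / s2) * |y - b| := by
        rw [show (y - gammaWeight γ y b s2 * (D / s2) * (y - b)) - (y - D / s2 * (y - b))
            = (1 - gammaWeight γ y b s2) * (D / s2) * (y - b) by ring,
          abs_mul, abs_mul, abs_div, abs_of_pos hs2]
    _ ≤ γ * ((1 + C) * (1 + (y - b) ^ 2 / s2)) * exp C * (1 + |D| / s2) * (1 + |y - b|) := by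
        gcongr ?_ * ?_ * ?_
        · exact hweight.trans (by gcongr)
        · linarith
        · linarith
    _ = (1 + |D| / s2) * (1 + C) * exp C * (1 + (y - b) ^ 2 / s2) * (1 + |y - b|) * γ := by
        ring
end
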